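/- Let m, n ≥ 1 with gcd(q_m, q_n) = 1, where q_k = (k+1)^k − 1. Let F be the free group on four generators x_m, t_m, x_n, t_n, and let R be the normal closure in F of {ρ_m(x_m,t_m), ρ_n(x_n,t_n), x_m^m, x_n^n}. Then R equals the join (inside F) of the normal closure of the three elements {ρ_m(x_m,t_m), ρ_n(x_n,t_n), x_m^m x_n^n} and the commutator subgroup [R, R]. (Equivalently, the relation module of the presentation ⟨x_m, t_m, x_n, t_n | ρ_m, ρ_n, x_m^m, x_n^n⟩ of Γ_{m,n} = Q_m ∗ Q_n is generated as a module by the images of ρ_m, ρ_n and x_m^m x_n^n.) -/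

import Mathlib

/-- The word `ρ_k(x,t) = (t x t⁻¹) x (t x t⁻¹)⁻¹ x^{-(k+1)}`, evaluated at elements
`x`, `t` of a group. -/
def rhoWord {G : Type*} [Group G] (k : ℕ) (x t : G) : G :=
  (t * x * t⁻¹) * x * (t * x * t⁻¹)⁻¹ * x ^ (-(k + 1 : ℤ))

/-- `q_k = (k+1)^k - 1`. -/
def q (k : ℕ) : ℕ := (k + 1) ^ k - 1

/-!
Modulo `T = ⟪ρ_m, ρ_n, x_m^m x_n^n⟫ ⊔ [R, R]`, the relation `ρ_k` says that `w = t x t⁻¹`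
conjugates `x` to `x^(k+1)`, so `w^k` conjugates `x^k` to `x^(k (k+1)^k)`. Since `w^k` and
`x^k` both lie in `R`, they commute modulo `[R, R]`, hence `x^k` has order dividing `q_k` in
`F ⧸ T`. As `x_m^m x_n^n ∈ T`, the images of `x_m^m` and `x_n^n` are mutually inverse, so both
are killed by the coprime numbers `q_m` and `q_n`, and thus `x_m^m, x_n^n ∈ T`, i.e. `R ≤ T`.
-/

section Group

variable {G : Type*} [Group G]

theorem map_rhoWord {H : Type*} [Group H] (f : G →* H) (k : ℕ) (x t : G) :
    f (rhoWord k x t) = rhoWord k (f x) (f t) := by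
  simp [rhoWord]

theorem conj_eq_pow_of_rhoWord_eq_one {k : ℕ} {x t : G} (h : rhoWord k x t = 1) :
    (t * x * t⁻¹) * x * (t * x * t⁻¹)⁻¹ = x ^ (k + 1) := by
  rw [rhoWord, mul_eq_one_iff_eq_inv, ← zpow_neg, neg_neg] at h
  exact_mod_cast h

theorem pow_conj_eq_pow_of_conj_eq_pow {w x : G} {e : ℕ} (h : w * x * w⁻¹ = x ^ e) (j : ℕ) :
    w ^ j * x * (w ^ j)⁻¹ = x ^ e ^ j := by
  induction j with
  | zero => simp
  | succ j ih =>
    calc w ^ (j + 1) * x * (w ^ (j + 1))⁻¹ = w * (w ^ j * x * (w ^ j)⁻¹) * w⁻¹ := by group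
      _ = x ^ e ^ (j + 1) := by rw [ih, ← conj_pow, h, ← pow_mul, pow_succ']

theorem pow_pow_q_eq_one_of_rhoWord_eq_one {k : ℕ} {x t : G} (hρ : rhoWord k x t = 1)
    (hcomm : Commute ((t * x * t⁻¹) ^ k) (x ^ k)) : (x ^ k) ^ q k = 1 := by
  have hconj : (t * x * t⁻¹) ^ k * x ^ k * ((t * x * t⁻¹) ^ k)⁻¹ = x ^ k := by
    rw [hcomm.eq, mul_inv_cancel_right]
  rw [← conj_pow, pow_conj_eq_pow_of_conj_eq_pow (conj_eq_pow_of_rhoWord_eq_one hρ), ← pow_mul]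
    at hconj
  have hq_succ : q k + 1 = (k + 1) ^ k := Nat.sub_add_cancel (Nat.one_le_pow _ _ k.succ_pos)
  rw [← mul_eq_right (b := x ^ k), ← pow_succ, ← pow_mul, hq_succ, Nat.mul_comm, hconj]

theorem eq_one_of_mul_eq_one_of_pow_eq_one {a b : G} {p r : ℕ} (hab : a * b = 1)
    (ha : a ^ p = 1) (hb : b ^ r = 1) (hpr : p.Coprime r) : a = 1 := by
  rw [eq_inv_of_mul_eq_one_right hab, inv_pow, inv_eq_one] at hb
  exact (pow_eq_one_iff_of_coprime hpr).1 ⟨ha, hb⟩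

variable {R T : Subgroup G} [R.Normal] [T.Normal]

theorem pow_pow_q_mem_of_rhoWord_mem (hRT : ⁅R, R⁆ ≤ T) {k : ℕ} {x t : G}
    (hρ : rhoWord k x t ∈ T) (hx : x ^ k ∈ R) : (x ^ k) ^ q k ∈ T := by
  have hw : (t * x * t⁻¹) ^ k ∈ R := by
    rw [conj_pow]
    exact ‹R.Normal›.conj_mem _ hx t
  have hker (g : G) : g ∈ T ↔ QuotientGroup.mk' T g = 1 := (QuotientGroup.eq_one_iff g).symm
  rw [hker] at hρ ⊢
  rw [map_pow, map_pow]
  apply pow_pow_q_eq_one_of_rhoWord_eq_one (t := QuotientGroup.mk' T t)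
  · rwa [← map_rhoWord]
  · have := (hker _).1 (hRT (Subgroup.commutator_mem_commutator hw hx))
    simpa only [map_commutatorElement, map_pow, map_mul, map_inv,
      commutatorElement_eq_one_iff_commute] using this

theorem mem_of_mul_mem_of_pow_mem_of_coprime {a b : G} {p r : ℕ} (hab : a * b ∈ T)
    (ha : a ^ p ∈ T) (hb : b ^ r ∈ T) (hpr : p.Coprime r) : a ∈ T := by
  rw [← QuotientGroup.eq_one_iff] at hab ha hb ⊢
  rw [QuotientGroup.mk_mul] at hab
  rw [QuotientGroup.mk_pow] at ha hb
  exact eq_one_of_mul_eq_one_of_pow_eq_one hab ha hb hpr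

end Group

theorem relationModule_three_generators_general (m n : ℕ)
    (hq : Nat.gcd (q m) (q n) = 1)
    (xm tm xn tn : FreeGroup (Fin 4))
    (R : Subgroup (FreeGroup (Fin 4)))
    (hR : R = Subgroup.normalClosure {rhoWord m xm tm, rhoWord n xn tn, xm ^ m, xn ^ n}) :
    R = Subgroup.normalClosure {rhoWord m xm tm, rhoWord n xn tn, xm ^ m * xn ^ n} ⊔
      ⁅R, R⁆ := by
  have hρm : rhoWord m xm tm ∈ R := hR ▸ Subgroup.subset_normalClosure (by simp)
  have hρn : rhoWord n xn tn ∈ R := hR ▸ Subgroup.subset_normalClosure (by simp)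
  have hxm : xm ^ m ∈ R := hR ▸ Subgroup.subset_normalClosure (by simp)
  have hxn : xn ^ n ∈ R := hR ▸ Subgroup.subset_normalClosure (by simp)
  have : R.Normal := hR ▸ inferInstance
  set T := Subgroup.normalClosure {rhoWord m xm tm, rhoWord n xn tn, xm ^ m * xn ^ n} ⊔ ⁅R, R⁆
  have hρmT : rhoWord m xm tm ∈ T :=
    Subgroup.mem_sup_left (Subgroup.subset_normalClosure (by simp))
  have hρnT : rhoWord n xn tn ∈ T :=
    Subgroup.mem_sup_left (Subgroup.subset_normalClosure (by simp))
  have hxmxnT : xm ^ m * xn ^ n ∈ T :=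
    Subgroup.mem_sup_left (Subgroup.subset_normalClosure (by simp))
  have hxmT : xm ^ m ∈ T := mem_of_mul_mem_of_pow_mem_of_coprime hxmxnT
    (pow_pow_q_mem_of_rhoWord_mem le_sup_right hρmT hxm)
    (pow_pow_q_mem_of_rhoWord_mem le_sup_right hρnT hxn) hq
  have hxnT : xn ^ n ∈ T := (T.mul_mem_cancel_left hxmT).1 hxmxnT
  apply le_antisymm
  · refine hR.le.trans (Subgroup.normalClosure_le_normal ?_)
    rintro g (rfl | rfl | rfl | rfl) <;> assumption
  · refine sup_le (Subgroup.normalClosure_le_normal ?_) (Subgroup.commutator_le_left R R)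
    rintro g (rfl | rfl | rfl)
    exacts [hρm, hρn, R.mul_mem hxm hxn]

/-- Let `m, n ≥ 1` with `gcd(q_m, q_n) = 1`.  In the free group `F` on the
four generators `x_m, t_m, x_n, t_n`, let `R` be the normal closure of
`{ρ_m(x_m,t_m), ρ_n(x_n,t_n), x_m^m, x_n^n}`.  Then `R` equals the join of the normal
closure of the three elements `{ρ_m(x_m,t_m), ρ_n(x_n,t_n), x_m^m * x_n^n}` and the
commutator subgroup `[R, R]`.  (Equivalently, the relation module of the presentation
`⟨x_m, t_m, x_n, t_n | ρ_m, ρ_n, x_m^m, x_n^n⟩` of `Γ_{m,n} = Q_m ∗ Q_n` is generated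
by the images of `ρ_m`, `ρ_n` and `x_m^m x_n^n`.) -/
theorem relationModule_three_generators (m n : ℕ) (hm : 1 ≤ m) (hn : 1 ≤ n)
    (hq : Nat.gcd (q m) (q n) = 1)
    (xm tm xn tn : FreeGroup (Fin 4))
    (hxm : xm = FreeGroup.of 0) (htm : tm = FreeGroup.of 1)
    (hxn : xn = FreeGroup.of 2) (htn : tn = FreeGroup.of 3)
    (R : Subgroup (FreeGroup (Fin 4)))
    (hR : R = Subgroup.normalClosure {rhoWord m xm tm, rhoWord n xn tn, xm ^ m, xn ^ n}) :
    R = Subgroup.normalClosure {rhoWord m xm tm, rhoWord n xn tn, xm ^ m * xn ^ n} ⊔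
      ⁅R, R⁆ :=
  relationModule_three_generators_general m n hq xm tm xn tn R hR
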